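/- Fix ε ≥ 0. Under Assumptions 1 and 2, with C = 1/(4c) + 1/2, for every measurable feasible f : 𝒳 → ℝ, the excess R̄-risk is controlled by the excess ε-hinge risk: R̄(f, ε) − R̄(f*, ε) ≤ C·(R_H(f, ε) − R_H(f*, ε)). -/

import Mathlib

/-!
Write `r̄(y, u) = 1[y u < -ε] + ½ 1[|u| ≤ ε]` and `h(y, u) = max 0 (1 + ε - y u)` for the
integrands of `R̄` and `R_H`, and consider the Lagrangian
`C h - r̄ + (A + 1) 1[y = 1, y u < -ε] + (B + 1) 1[y = -1, y u < -ε]` with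
`A = (C - ½)/t1 - 2C` and `B = (C - ½)/(1 - tm) - 2C`. Its conditional expectation given `X = x`
is piecewise linear in the score `u` with breakpoints `±ε`, `±(1 + ε)`, so it is bounded below by
its least value at these four points as soon as `A, B ≥ -½`, which is what `C = 1/(4c) + 1/2`
ensures; comparing the four values shows that `f*(x)` attains the minimum. Integrating over `X`,
`f*` minimises the Lagrangian risk. Feasibility of `f` says that its class-wise error probabilities
are at most those of `f*`, and `A + 1, B + 1 ≥ 0`, so the multiplier terms can be dropped.
-/

open MeasureTheory ProbabilityTheory
open scoped ENNReal

noncomputable def optimalScore (t1 tm ε η : ℝ) : ℝ :=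
  if tm < η then 1 + ε else if t1 ≤ η then ε * Real.sign (η - 1 / 2) else -(1 + ε)

/-- The integrand of the Lagrangian above at label `y` and score `u`: the error indicator of `r̄`
cancels against the `+ 1` of the multipliers `A + 1` and `B + 1`. -/
noncomputable def lagrangian (C A B ε y u : ℝ) : ℝ :=
  C * max 0 (1 + ε - y * u) + (if y = 1 ∧ y * u < -ε then A else 0)
    + (if y = -1 ∧ y * u < -ε then B else 0) - (if |u| ≤ ε then 1 / 2 else 0)

noncomputable def condLagrangian (C A B ε η u : ℝ) : ℝ :=
  η * lagrangian C A B ε 1 u + (1 - η) * lagrangian C A B ε (-1) u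

section Pointwise

variable {C A B ε η u : ℝ}

theorem lagrangian_one :
    lagrangian C A B ε 1 u =
      C * max 0 (1 + ε - u) + (if u < -ε then A else 0) - (if |u| ≤ ε then 1 / 2 else 0) := by
  norm_num [lagrangian]

theorem lagrangian_neg_one :
    lagrangian C A B ε (-1) u =
      C * max 0 (1 + ε + u) + (if ε < u then B else 0) - (if |u| ≤ ε then 1 / 2 else 0) := by
  norm_num [lagrangian]

theorem neg_half_le_lagrangian (hC : 0 ≤ C) (hA : -(1 / 2) ≤ A) (hB : -(1 / 2) ≤ B) (y u : ℝ) :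
    -(1 / 2) ≤ lagrangian C A B ε y u := by
  by_cases hy : y = 1 ∨ y = -1
  · rcases hy with rfl | rfl
    · have := mul_nonneg hC (le_max_left 0 (1 + ε - u))
      rw [lagrangian_one]
      split_ifs <;> linarith [neg_abs_le u, le_abs_self u]
    · have := mul_nonneg hC (le_max_left 0 (1 + ε + u))
      rw [lagrangian_neg_one]
      split_ifs <;> linarith [neg_abs_le u, le_abs_self u]
  · have := mul_nonneg hC (le_max_left 0 (1 + ε - y * u))
    simp only [lagrangian, not_or.1 hy, false_and, if_false]
    split_ifs <;> linarith

theorem condLagrangian_of_lt_neg (hε : 0 ≤ ε) (hu : u < -ε) :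
    condLagrangian C A B ε η u
      = C * (η * (1 + ε - u) + (1 - η) * max 0 (1 + ε + u)) + A * η := by
  have hu₁ : ¬ |u| ≤ ε := fun h => by linarith [neg_abs_le u]
  have hu₂ : ¬ ε < u := by linarith
  simp only [condLagrangian, lagrangian_one, lagrangian_neg_one, hu, hu₁, hu₂, if_true, if_false,
    max_eq_right (by linarith : (0 : ℝ) ≤ 1 + ε - u)]
  ring

theorem condLagrangian_of_abs_le (hu : |u| ≤ ε) :
    condLagrangian C A B ε η u = C * (1 + ε + u * (1 - 2 * η)) - 1 / 2 := by
  obtain ⟨hu₁, hu₂⟩ := abs_le.1 hu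
  have h₁ : ¬ u < -ε := by linarith
  have h₂ : ¬ ε < u := by linarith
  simp only [condLagrangian, lagrangian_one, lagrangian_neg_one, hu, h₁, h₂, if_true, if_false,
    max_eq_right (by linarith : (0 : ℝ) ≤ 1 + ε - u),
    max_eq_right (by linarith : (0 : ℝ) ≤ 1 + ε + u)]
  ring

theorem condLagrangian_of_lt (hε : 0 ≤ ε) (hu : ε < u) :
    condLagrangian C A B ε η u
      = C * (η * max 0 (1 + ε - u) + (1 - η) * (1 + ε + u)) + B * (1 - η) := by
  have hu₁ : ¬ |u| ≤ ε := fun h => by linarith [le_abs_self u]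
  have hu₂ : ¬ u < -ε := by linarith
  simp only [condLagrangian, lagrangian_one, lagrangian_neg_one, hu, hu₁, hu₂, if_true, if_false,
    max_eq_right (by linarith : (0 : ℝ) ≤ 1 + ε + u)]
  ring

theorem condLagrangian_neg_one_add (hε : 0 ≤ ε) :
    condLagrangian C A B ε η (-(1 + ε)) = η * (2 * C * (1 + ε) + A) := by
  rw [condLagrangian_of_lt_neg hε (by linarith), max_eq_left (by linarith)]
  ring

theorem condLagrangian_neg_eps (hε : 0 ≤ ε) :
    condLagrangian C A B ε η (-ε) = C * (1 + 2 * ε * η) - 1 / 2 := by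
  rw [condLagrangian_of_abs_le (by rw [abs_neg, abs_of_nonneg hε])]
  ring

theorem condLagrangian_eps (hε : 0 ≤ ε) :
    condLagrangian C A B ε η ε = C * (1 + 2 * ε * (1 - η)) - 1 / 2 := by
  rw [condLagrangian_of_abs_le (abs_of_nonneg hε).le]
  ring

theorem condLagrangian_one_add (hε : 0 ≤ ε) :
    condLagrangian C A B ε η (1 + ε) = (1 - η) * (2 * C * (1 + ε) + B) := by
  rw [condLagrangian_of_lt hε (by linarith), max_eq_left (by linarith)]
  ring

theorem min_condLagrangian_le_of_lt_neg (hC : 0 ≤ C) (hA : -(1 / 2) ≤ A) (hε : 0 ≤ ε)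
    (hη₀ : 0 ≤ η) (hη₁ : η ≤ 1) (hu : u < -ε) :
    min (condLagrangian C A B ε η (-(1 + ε))) (condLagrangian C A B ε η (-ε))
      ≤ condLagrangian C A B ε η u := by
  rw [condLagrangian_neg_one_add hε, condLagrangian_neg_eps hε, condLagrangian_of_lt_neg hε hu]
  rcases le_or_gt u (-(1 + ε)) with hu' | hu'
  · rw [max_eq_left (by linarith)]
    exact min_le_of_left_le (by nlinarith [mul_nonneg hC hη₀])
  rw [max_eq_right (by linarith)]
  rcases le_or_gt η (1 / 2) with hη | hη
  · have := mul_nonneg hC (mul_nonneg (by linarith : 0 ≤ u + (1 + ε)) (by linarith : 0 ≤ 1 - 2 * η))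
    exact min_le_of_left_le (by nlinarith)
  · have := mul_nonneg hC (mul_nonneg (by linarith : 0 ≤ -ε - u) (by linarith : 0 ≤ 2 * η - 1))
    exact min_le_of_right_le (by nlinarith)

theorem min_condLagrangian_le_of_abs_le (hC : 0 ≤ C) (hu : |u| ≤ ε) :
    min (condLagrangian C A B ε η (-ε)) (condLagrangian C A B ε η ε)
      ≤ condLagrangian C A B ε η u := by
  have hε := (abs_nonneg u).trans hu
  rw [condLagrangian_neg_eps hε, condLagrangian_eps hε, condLagrangian_of_abs_le hu]
  obtain ⟨hu₁, hu₂⟩ := abs_le.1 hu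
  rcases le_or_gt η (1 / 2) with hη | hη
  · have := mul_nonneg hC (mul_nonneg (by linarith : 0 ≤ u + ε) (by linarith : 0 ≤ 1 - 2 * η))
    exact min_le_of_left_le (by nlinarith)
  · have := mul_nonneg hC (mul_nonneg (by linarith : 0 ≤ ε - u) (by linarith : 0 ≤ 2 * η - 1))
    exact min_le_of_right_le (by nlinarith)

theorem min_condLagrangian_le_of_lt (hC : 0 ≤ C) (hB : -(1 / 2) ≤ B) (hε : 0 ≤ ε)
    (hη₀ : 0 ≤ η) (hη₁ : η ≤ 1) (hu : ε < u) :
    min (condLagrangian C A B ε η ε) (condLagrangian C A B ε η (1 + ε))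
      ≤ condLagrangian C A B ε η u := by
  rw [condLagrangian_eps hε, condLagrangian_one_add hε, condLagrangian_of_lt hε hu]
  rcases le_or_gt (1 + ε) u with hu' | hu'
  · rw [max_eq_left (by linarith)]
    exact min_le_of_right_le (by nlinarith [mul_nonneg hC (sub_nonneg.2 hη₁)])
  rw [max_eq_right (by linarith)]
  rcases le_or_gt η (1 / 2) with hη | hη
  · have := mul_nonneg hC (mul_nonneg (by linarith : 0 ≤ u - ε) (by linarith : 0 ≤ 1 - 2 * η))
    exact min_le_of_left_le (by nlinarith)
  · have := mul_nonneg hC (mul_nonneg (by linarith : 0 ≤ 1 + ε - u) (by linarith : 0 ≤ 2 * η - 1))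
    exact min_le_of_right_le (by nlinarith)

variable {t1 tm : ℝ}

theorem abs_mul_sign_le (hε : 0 ≤ ε) (r : ℝ) : |ε * Real.sign r| ≤ ε := by
  rcases Real.sign_apply_eq r with h | h | h <;> simp [h, abs_of_nonneg hε, hε]

theorem abs_optimalScore_le (hε : 0 ≤ ε) : |optimalScore t1 tm ε η| ≤ 1 + ε := by
  unfold optimalScore
  split_ifs
  · exact (abs_of_nonneg (by linarith)).le
  · linarith [abs_mul_sign_le hε (η - 1 / 2)]
  · rw [abs_neg, abs_of_nonneg (by linarith)]

theorem optimalScore_lt_neg_iff (hε : 0 ≤ ε) (ht : t1 ≤ tm) :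
    optimalScore t1 tm ε η < -ε ↔ η < t1 := by
  unfold optimalScore
  split_ifs
  · constructor <;> intro <;> linarith
  · have := abs_le.1 (abs_mul_sign_le hε (η - 1 / 2))
    constructor <;> intro <;> linarith
  · constructor <;> intro <;> linarith

theorem lt_optimalScore_iff (hε : 0 ≤ ε) (ht : t1 ≤ tm) :
    ε < optimalScore t1 tm ε η ↔ tm < η := by
  unfold optimalScore
  split_ifs
  · constructor <;> intro <;> linarith
  · have := abs_le.1 (abs_mul_sign_le hε (η - 1 / 2))
    constructor <;> intro <;> linarith
  · constructor <;> intro <;> linarith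

theorem measurable_optimalScore : Measurable (optimalScore t1 tm ε) := by
  have h_sign : Measurable Real.sign := by
    unfold Real.sign
    exact Measurable.ite measurableSet_Iio measurable_const
      (Measurable.ite measurableSet_Ioi measurable_const measurable_const)
  unfold optimalScore
  exact Measurable.ite measurableSet_Ioi measurable_const (Measurable.ite measurableSet_Ici
    (measurable_const.mul (h_sign.comp (measurable_id.sub_const _))) measurable_const)

theorem condLagrangian_eps_mul_sign_le (hC : 0 ≤ C) (hε : 0 ≤ ε) :
    condLagrangian C A B ε η (ε * Real.sign (η - 1 / 2))
      ≤ min (condLagrangian C A B ε η (-ε)) (condLagrangian C A B ε η ε) := by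
  have hCε := mul_nonneg hC hε
  rw [condLagrangian_neg_eps hε, condLagrangian_eps hε]
  rcases lt_trichotomy η (1 / 2) with h | rfl | h
  · rw [Real.sign_of_neg (by linarith), mul_neg_one, condLagrangian_neg_eps hε]
    exact le_min le_rfl (by nlinarith)
  · rw [sub_self, Real.sign_zero, mul_zero, condLagrangian_of_abs_le (by rwa [abs_zero])]
    exact le_min (le_of_eq (by ring)) (le_of_eq (by ring))
  · rw [Real.sign_of_pos (by linarith), mul_one, condLagrangian_eps hε]
    exact le_min (by nlinarith) le_rfl

/-- `A` and `B` are chosen so that the values at `-(1 + ε)` and `-ε` tie exactly when `η = t1`,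
and those at `1 + ε` and `ε` tie exactly when `η = tm`. -/
theorem condLagrangian_optimalScore_le_breakpoints (hC : 1 / 2 ≤ C) (hε : 0 ≤ ε) (ht1 : 0 < t1)
    (ht1' : t1 ≤ 1 / 2) (htm : 1 / 2 ≤ tm) (htm' : tm < 1)
    (hA : A = (C - 1 / 2) / t1 - 2 * C) (hB : B = (C - 1 / 2) / (1 - tm) - 2 * C) :
    condLagrangian C A B ε η (optimalScore t1 tm ε η) ≤ condLagrangian C A B ε η (-(1 + ε)) ∧
    condLagrangian C A B ε η (optimalScore t1 tm ε η) ≤ condLagrangian C A B ε η (-ε) ∧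
    condLagrangian C A B ε η (optimalScore t1 tm ε η) ≤ condLagrangian C A B ε η ε ∧
    condLagrangian C A B ε η (optimalScore t1 tm ε η) ≤ condLagrangian C A B ε η (1 + ε) := by
  have h_left : η * (2 * C * (1 + ε) + A) - (C * (1 + 2 * ε * η) - 1 / 2)
      = (C - 1 / 2) * (η - t1) / t1 := by
    rw [hA]; field_simp; ring
  have h_right : (1 - η) * (2 * C * (1 + ε) + B) - (C * (1 + 2 * ε * (1 - η)) - 1 / 2)
      = (C - 1 / 2) * (tm - η) / (1 - tm) := by
    rw [hB]; field_simp [(by linarith : 1 - tm ≠ 0)]; ring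
  have hCε := mul_nonneg (by linarith : 0 ≤ C) hε
  have h1tm : 0 < 1 - tm := by linarith
  rw [condLagrangian_neg_one_add hε, condLagrangian_neg_eps hε, condLagrangian_eps hε,
    condLagrangian_one_add hε, optimalScore]
  split_ifs with h₁ h₂
  · rw [condLagrangian_one_add hε]
    have : (C - 1 / 2) * (tm - η) / (1 - tm) ≤ 0 :=
      div_nonpos_of_nonpos_of_nonneg (mul_nonpos_of_nonneg_of_nonpos (by linarith) (by linarith))
        h1tm.le
    have : 0 ≤ (C - 1 / 2) * (η - t1) / t1 :=
      div_nonneg (mul_nonneg (by linarith) (by linarith)) ht1.le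
    have := mul_nonneg hCε (by linarith : 0 ≤ 2 * η - 1)
    refine ⟨?_, ?_, ?_, ?_⟩ <;> nlinarith
  · have : 0 ≤ (C - 1 / 2) * (η - t1) / t1 :=
      div_nonneg (mul_nonneg (by linarith) (sub_nonneg.2 h₂)) ht1.le
    have : 0 ≤ (C - 1 / 2) * (tm - η) / (1 - tm) :=
      div_nonneg (mul_nonneg (by linarith) (by linarith)) h1tm.le
    have hv := condLagrangian_eps_mul_sign_le (C := C) (A := A) (B := B) (η := η) (by linarith) hε
    rw [condLagrangian_neg_eps hε, condLagrangian_eps hε] at hv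
    have := min_le_left (C * (1 + 2 * ε * η) - 1 / 2) (C * (1 + 2 * ε * (1 - η)) - 1 / 2)
    have := min_le_right (C * (1 + 2 * ε * η) - 1 / 2) (C * (1 + 2 * ε * (1 - η)) - 1 / 2)
    refine ⟨?_, ?_, ?_, ?_⟩ <;> linarith
  · rw [condLagrangian_neg_one_add hε]
    have : (C - 1 / 2) * (η - t1) / t1 ≤ 0 :=
      div_nonpos_of_nonpos_of_nonneg (mul_nonpos_of_nonneg_of_nonpos (by linarith) (by linarith))
        ht1.le
    have : 0 ≤ (C - 1 / 2) * (tm - η) / (1 - tm) :=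
      div_nonneg (mul_nonneg (by linarith) (by linarith)) h1tm.le
    have := mul_nonneg hCε (by linarith : 0 ≤ 1 - 2 * η)
    refine ⟨?_, ?_, ?_, ?_⟩ <;> nlinarith

theorem condLagrangian_optimalScore_le (hC : 1 / 2 ≤ C) (hA₀ : -(1 / 2) ≤ A)
    (hB₀ : -(1 / 2) ≤ B) (hε : 0 ≤ ε) (hη₀ : 0 ≤ η) (hη₁ : η ≤ 1) (ht1 : 0 < t1)
    (ht1' : t1 ≤ 1 / 2) (htm : 1 / 2 ≤ tm) (htm' : tm < 1)
    (hA : A = (C - 1 / 2) / t1 - 2 * C) (hB : B = (C - 1 / 2) / (1 - tm) - 2 * C) (u : ℝ) :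
    condLagrangian C A B ε η (optimalScore t1 tm ε η) ≤ condLagrangian C A B ε η u := by
  obtain ⟨h₁, h₂, h₃, h₄⟩ :=
    condLagrangian_optimalScore_le_breakpoints (η := η) hC hε ht1 ht1' htm htm' hA hB
  have hC₀ : 0 ≤ C := by linarith
  rcases lt_or_ge u (-ε) with hu | hu
  · exact (le_min h₁ h₂).trans (min_condLagrangian_le_of_lt_neg hC₀ hA₀ hε hη₀ hη₁ hu)
  rcases le_or_gt u ε with hu' | hu'
  · exact (le_min h₂ h₃).trans (min_condLagrangian_le_of_abs_le hC₀ (abs_le.2 ⟨hu, hu'⟩))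
  · exact (le_min h₃ h₄).trans (min_condLagrangian_le_of_lt hC₀ hB₀ hε hη₀ hη₁ hu')

end Pointwise

theorem neg_half_le_multiplier {c d C : ℝ} (hc : 0 < c) (hd : 0 < d) (hdc : d ≤ 1 / 2 - c)
    (hC : C = 1 / (4 * c) + 1 / 2) : -(1 / 2) ≤ (C - 1 / 2) / d - 2 * C := by
  rw [hC, add_sub_cancel_right, div_div, le_sub_iff_add_le, le_div_iff₀ (by positivity)]
  field_simp
  nlinarith

theorem measurable_lagrangian (C A B ε y : ℝ) : Measurable (lagrangian C A B ε y) := by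
  unfold lagrangian
  refine ((Measurable.add (by fun_prop) ?_).add ?_).sub ?_ <;>
    exact Measurable.ite (by measurability) measurable_const measurable_const

theorem lagrangian_eq_indicator {Ω : Type*} {Y Z : Ω → ℝ} {C A B ε : ℝ} :
    (fun ω => lagrangian C A B ε (Y ω) (Z ω)) = fun ω => C * max 0 (1 + ε - Y ω * Z ω)
      + ({ω | Y ω = 1} ∩ {ω | Y ω * Z ω < -ε}).indicator (fun _ => A) ω
      + ({ω | Y ω = -1} ∩ {ω | Y ω * Z ω < -ε}).indicator (fun _ => B) ω
      - {ω | |Z ω| ≤ ε}.indicator (fun _ => 1 / 2) ω := by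
  funext ω
  simp only [lagrangian, Set.indicator_apply]
  rfl

theorem inter_setOf_mul_lt_eq {Ω : Type*} {Y Z : Ω → ℝ} {ε y : ℝ} {p : Ω → Prop}
    (h : ∀ ω, y * Z ω < -ε ↔ p ω) :
    {ω | Y ω = y} ∩ {ω | Y ω * Z ω < -ε} = {ω | Y ω = y} ∩ {ω | p ω} :=
  Set.ext fun ω => and_congr_right fun (hω : Y ω = y) => by
    show Y ω * Z ω < -ε ↔ p ω
    rw [hω]
    exact h ω

structure IsRegressionFunction {𝒳 Ω : Type*} [MeasurableSpace 𝒳] [MeasurableSpace Ω]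
    (P : Measure Ω) (X : Ω → 𝒳) (Y : Ω → ℝ) (η : 𝒳 → ℝ) : Prop where
  measurable_X : Measurable X
  measurable_Y : Measurable Y
  label : ∀ ω, Y ω = 1 ∨ Y ω = -1
  measurable : Measurable η
  mem_Icc : ∀ x, η x ∈ Set.Icc (0 : ℝ) 1
  measure_label_one : ∀ A : Set 𝒳, MeasurableSet A →
    P {ω | X ω ∈ A ∧ Y ω = 1} = ∫⁻ x in A, ENNReal.ofReal (η x) ∂(P.map X)

theorem setLIntegral_comp_eq_of_map_restrict {𝒳 Ω : Type*} [MeasurableSpace 𝒳]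
    [MeasurableSpace Ω] {P : Measure Ω} {X : Ω → 𝒳} {S : Set Ω} {ρ k : 𝒳 → ℝ≥0∞}
    (hX : Measurable X) (hρ : Measurable ρ) (hk : Measurable k)
    (h : (P.restrict S).map X = (P.map X).withDensity ρ) :
    ∫⁻ ω in S, k (X ω) ∂P = ∫⁻ ω, ρ (X ω) * k (X ω) ∂P := by
  rw [← lintegral_map hk hX, h, lintegral_withDensity_eq_lintegral_mul _ hρ hk,
    lintegral_map (hρ.mul hk) hX]
  rfl

namespace IsRegressionFunction

variable {𝒳 Ω : Type*} [MeasurableSpace 𝒳] [MeasurableSpace Ω] {P : Measure Ω} {X : Ω → 𝒳}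
  {Y : Ω → ℝ} {η : 𝒳 → ℝ}

theorem measurableSet_label (h : IsRegressionFunction P X Y η) (y : ℝ) :
    MeasurableSet {ω | Y ω = y} :=
  h.measurable_Y (measurableSet_singleton y)

theorem map_restrict_eq_withDensity (h : IsRegressionFunction P X Y η) :
    (P.restrict {ω | Y ω = 1}).map X = (P.map X).withDensity fun x => ENNReal.ofReal (η x) := by
  ext A hA
  rw [Measure.map_apply h.measurable_X hA, Measure.restrict_apply (h.measurable_X hA),
    withDensity_apply _ hA, ← h.measure_label_one A hA]
  rfl

theorem map_restrict_compl_eq_withDensity [IsFiniteMeasure P]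
    (h : IsRegressionFunction P X Y η) :
    (P.restrict {ω | Y ω = 1}ᶜ).map X
      = (P.map X).withDensity fun x => ENNReal.ofReal (1 - η x) := by
  refine (Measure.add_right_inj ((P.restrict {ω | Y ω = 1}).map X) _ _).1 ?_
  rw [← Measure.map_add _ _ h.measurable_X,
    Measure.restrict_add_restrict_compl (h.measurableSet_label 1), h.map_restrict_eq_withDensity,
    ← withDensity_add_left h.measurable.ennreal_ofReal]
  convert (withDensity_one (μ := P.map X)).symm using 2
  funext x
  obtain ⟨h₀, h₁⟩ := h.mem_Icc x
  rw [Pi.add_apply, ← ENNReal.ofReal_add h₀ (sub_nonneg.2 h₁), add_sub_cancel,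
    ENNReal.ofReal_one, Pi.one_apply]

theorem lintegral_comp_label [IsFiniteMeasure P] (h : IsRegressionFunction P X Y η)
    {φ : ℝ → 𝒳 → ℝ≥0∞} (h₁ : Measurable (φ 1)) (h₂ : Measurable (φ (-1))) :
    ∫⁻ ω, φ (Y ω) (X ω) ∂P = ∫⁻ ω, ENNReal.ofReal (η (X ω)) * φ 1 (X ω)
      + ENNReal.ofReal (1 - η (X ω)) * φ (-1) (X ω) ∂P := by
  have hS := h.measurableSet_label 1
  rw [← lintegral_add_compl _ hS,
    setLIntegral_congr_fun hS fun ω (hω : Y ω = 1) => by rw [hω],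
    setLIntegral_congr_fun hS.compl fun ω (hω : Y ω ≠ 1) => by
      rw [(h.label ω).resolve_left hω],
    setLIntegral_comp_eq_of_map_restrict h.measurable_X h.measurable.ennreal_ofReal h₁
      h.map_restrict_eq_withDensity,
    setLIntegral_comp_eq_of_map_restrict h.measurable_X
      (measurable_const.sub h.measurable).ennreal_ofReal h₂ h.map_restrict_compl_eq_withDensity]
  exact (lintegral_add_left
    ((h.measurable.comp h.measurable_X).ennreal_ofReal.mul (h₁.comp h.measurable_X)) _).symm

theorem measurable_comp_label (h : IsRegressionFunction P X Y η) {ψ : ℝ → 𝒳 → ℝ}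
    (h₁ : Measurable (ψ 1)) (h₂ : Measurable (ψ (-1))) :
    Measurable fun ω => ψ (Y ω) (X ω) := by
  have : (fun ω => ψ (Y ω) (X ω)) = fun ω => if Y ω = 1 then ψ 1 (X ω) else ψ (-1) (X ω) := by
    funext ω
    rcases h.label ω with hω | hω <;> norm_num [hω]
  rw [this]
  exact Measurable.ite (h.measurableSet_label 1) (h₁.comp h.measurable_X) (h₂.comp h.measurable_X)

/-- Only `χ (Y, X)` is assumed integrable, not `χ (1, X)` and `χ (-1, X)` separately (the hinge
loss of `f` is not), hence the detour through lower integrals. -/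
theorem integral_comp_label_le [IsFiniteMeasure P] (h : IsRegressionFunction P X Y η)
    {ψ χ : ℝ → 𝒳 → ℝ} (hψ₀ : ∀ y x, 0 ≤ ψ y x) (hχ₀ : ∀ y x, 0 ≤ χ y x)
    (hψ₁ : Measurable (ψ 1)) (hψ₂ : Measurable (ψ (-1)))
    (hχ₁ : Measurable (χ 1)) (hχ₂ : Measurable (χ (-1)))
    (hle : ∀ x, η x * ψ 1 x + (1 - η x) * ψ (-1) x ≤ η x * χ 1 x + (1 - η x) * χ (-1) x)
    (hχ : Integrable (fun ω => χ (Y ω) (X ω)) P) :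
    ∫ ω, ψ (Y ω) (X ω) ∂P ≤ ∫ ω, χ (Y ω) (X ω) ∂P := by
  have h_ofReal (φ : ℝ → 𝒳 → ℝ) (hφ₀ : ∀ y x, 0 ≤ φ y x) (x : 𝒳) :
      ENNReal.ofReal (η x) * ENNReal.ofReal (φ 1 x)
          + ENNReal.ofReal (1 - η x) * ENNReal.ofReal (φ (-1) x)
        = ENNReal.ofReal (η x * φ 1 x + (1 - η x) * φ (-1) x) := by
    obtain ⟨hη₀, hη₁⟩ := h.mem_Icc x
    rw [ENNReal.ofReal_add (mul_nonneg hη₀ (hφ₀ _ _)) (mul_nonneg (sub_nonneg.2 hη₁) (hφ₀ _ _)),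
      ENNReal.ofReal_mul hη₀, ENNReal.ofReal_mul (sub_nonneg.2 hη₁)]
  rw [integral_eq_lintegral_of_nonneg_ae (ae_of_all _ fun ω => hψ₀ _ _)
      (h.measurable_comp_label hψ₁ hψ₂).aestronglyMeasurable,
    integral_eq_lintegral_of_nonneg_ae (ae_of_all _ fun ω => hχ₀ _ _) hχ.aestronglyMeasurable]
  refine ENNReal.toReal_mono hχ.lintegral_lt_top.ne ?_
  calc ∫⁻ ω, ENNReal.ofReal (ψ (Y ω) (X ω)) ∂P
      = ∫⁻ ω, ENNReal.ofReal (η (X ω) * ψ 1 (X ω) + (1 - η (X ω)) * ψ (-1) (X ω)) ∂P := by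
        rw [h.lintegral_comp_label (φ := fun y x => ENNReal.ofReal (ψ y x)) hψ₁.ennreal_ofReal
          hψ₂.ennreal_ofReal]
        simp only [h_ofReal ψ hψ₀]
    _ ≤ ∫⁻ ω, ENNReal.ofReal (η (X ω) * χ 1 (X ω) + (1 - η (X ω)) * χ (-1) (X ω)) ∂P :=
        lintegral_mono fun ω => ENNReal.ofReal_le_ofReal (hle _)
    _ = ∫⁻ ω, ENNReal.ofReal (χ (Y ω) (X ω)) ∂P := by
        rw [h.lintegral_comp_label (φ := fun y x => ENNReal.ofReal (χ y x)) hχ₁.ennreal_ofReal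
          hχ₂.ennreal_ofReal]
        simp only [h_ofReal χ hχ₀]

theorem integral_lagrangian_le [IsFiniteMeasure P] {C A B ε : ℝ}
    (h : IsRegressionFunction P X Y η) (hC : 0 ≤ C) (hA₀ : -(1 / 2) ≤ A) (hB₀ : -(1 / 2) ≤ B)
    {g g' : 𝒳 → ℝ} (hg : Measurable g) (hg' : Measurable g')
    (hle : ∀ x, condLagrangian C A B ε (η x) (g x) ≤ condLagrangian C A B ε (η x) (g' x))
    (hint : Integrable (fun ω => lagrangian C A B ε (Y ω) (g (X ω))) P)
    (hint' : Integrable (fun ω => lagrangian C A B ε (Y ω) (g' (X ω))) P) :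
    ∫ ω, lagrangian C A B ε (Y ω) (g (X ω)) ∂P
      ≤ ∫ ω, lagrangian C A B ε (Y ω) (g' (X ω)) ∂P := by
  have hL (y : ℝ) {k : 𝒳 → ℝ} (hk : Measurable k) :
      Measurable fun x => lagrangian C A B ε y (k x) + 1 / 2 :=
    ((measurable_lagrangian ..).comp hk).add_const _
  have key := h.integral_comp_label_le (ψ := fun y x => lagrangian C A B ε y (g x) + 1 / 2)
    (χ := fun y x => lagrangian C A B ε y (g' x) + 1 / 2)
    (fun y x => by linarith [neg_half_le_lagrangian (ε := ε) hC hA₀ hB₀ y (g x)])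
    (fun y x => by linarith [neg_half_le_lagrangian (ε := ε) hC hA₀ hB₀ y (g' x)])
    (hL 1 hg) (hL (-1) hg) (hL 1 hg') (hL (-1) hg')
    (fun x => by have := hle x; unfold condLagrangian at this; linarith)
    (hint'.add (integrable_const _))
  rwa [integral_add hint (integrable_const _), integral_add hint' (integrable_const _),
    add_le_add_iff_right] at key

end IsRegressionFunction

section Risk

variable {Ω : Type*} [MeasurableSpace Ω] {P : Measure Ω} [IsFiniteMeasure P] {Y Z : Ω → ℝ}
  {C A B ε : ℝ}

theorem integrable_hinge_of_abs_le (hY : Measurable Y) (hZ : Measurable Z)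
    (hYval : ∀ ω, Y ω = 1 ∨ Y ω = -1) {M : ℝ} (hM : ∀ ω, |Z ω| ≤ M) :
    Integrable (fun ω => max 0 (1 + ε - Y ω * Z ω)) P := by
  refine Integrable.of_bound
    (measurable_const.max (measurable_const.sub (hY.mul hZ))).aestronglyMeasurable
    (|1 + ε| + M) (ae_of_all _ fun ω => ?_)
  have hYZ : |Y ω * Z ω| ≤ M := by rcases hYval ω with h | h <;> simp [h, hM ω]
  rw [Real.norm_of_nonneg (le_max_left _ _)]
  exact max_le (by linarith [abs_nonneg (1 + ε), abs_nonneg (Y ω * Z ω)])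
    (by linarith [le_abs_self (1 + ε), neg_abs_le (Y ω * Z ω)])

theorem integrable_lagrangian (hY : Measurable Y) (hZ : Measurable Z)
    (hint : Integrable (fun ω => max 0 (1 + ε - Y ω * Z ω)) P) :
    Integrable (fun ω => lagrangian C A B ε (Y ω) (Z ω)) P := by
  rw [lagrangian_eq_indicator]
  refine (((hint.const_mul C).add ((integrable_const A).indicator ?_)).add
    ((integrable_const B).indicator ?_)).sub ((integrable_const _).indicator ?_) <;>
    measurability

theorem integral_lagrangian_eq (hY : Measurable Y) (hZ : Measurable Z)
    (hint : Integrable (fun ω => max 0 (1 + ε - Y ω * Z ω)) P) :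
    ∫ ω, lagrangian C A B ε (Y ω) (Z ω) ∂P = C * ∫ ω, max 0 (1 + ε - Y ω * Z ω) ∂P
      + A * P.real ({ω | Y ω = 1} ∩ {ω | Y ω * Z ω < -ε})
      + B * P.real ({ω | Y ω = -1} ∩ {ω | Y ω * Z ω < -ε})
      - 1 / 2 * P.real {ω | |Z ω| ≤ ε} := by
  have h₁ : MeasurableSet ({ω | Y ω = 1} ∩ {ω | Y ω * Z ω < -ε}) := by measurability
  have h₂ : MeasurableSet ({ω | Y ω = -1} ∩ {ω | Y ω * Z ω < -ε}) := by measurability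
  have h₀ : MeasurableSet {ω | |Z ω| ≤ ε} := by measurability
  have i₁ := (integrable_const A).indicator h₁ (μ := P)
  have i₂ := (integrable_const B).indicator h₂ (μ := P)
  have i₀ := (integrable_const (1 / 2 : ℝ)).indicator h₀ (μ := P)
  have iC := hint.const_mul C
  rw [lagrangian_eq_indicator, integral_sub ((iC.fun_add i₁).fun_add i₂) i₀,
    integral_add (iC.fun_add i₁) i₂, integral_add iC i₁, integral_const_mul,
    integral_indicator_const _ h₁, integral_indicator_const _ h₂, integral_indicator_const _ h₀]
  simp only [smul_eq_mul]
  ring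

theorem measureReal_eq_add_label (hY : Measurable Y) (hYval : ∀ ω, Y ω = 1 ∨ Y ω = -1)
    (E : Set Ω) : P.real E = P.real ({ω | Y ω = 1} ∩ E) + P.real ({ω | Y ω = -1} ∩ E) := by
  have hS : MeasurableSet {ω | Y ω = 1} := hY (measurableSet_singleton 1)
  have : {ω | Y ω = -1} = {ω | Y ω = 1}ᶜ := by
    ext ω
    rcases hYval ω with h | h <;> norm_num [h]
  rw [this, ← Set.sdiff_eq_compl_inter, Set.inter_comm]
  exact (measureReal_inter_add_sdiff hS).symm

theorem measureReal_inter_le_of_cond_le {s t u : Set Ω} (hs : MeasurableSet s) (hs₀ : P s ≠ 0)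
    (h : P[|s] t ≤ P[|s] u) : P.real (s ∩ t) ≤ P.real (s ∩ u) := by
  rw [cond_apply hs, cond_apply hs] at h
  exact ENNReal.toReal_mono (measure_ne_top _ _) ((ENNReal.mul_le_mul_iff_right
    (ENNReal.inv_ne_zero.2 (measure_ne_top _ _)) (ENNReal.inv_ne_top.2 hs₀)).1 h)

end Risk

theorem excess_Rbar_le_excess_hinge_general
    {𝒳 : Type*} [MeasurableSpace 𝒳]
    {Ω : Type*} [MeasurableSpace Ω] (P : Measure Ω) [IsProbabilityMeasure P]
    (X : Ω → 𝒳) (Y : Ω → ℝ) (hX : Measurable X) (hY : Measurable Y)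
    (hYval : ∀ ω, Y ω = 1 ∨ Y ω = -1)
    (hpos1 : 0 < P {ω | Y ω = 1}) (hposm : 0 < P {ω | Y ω = -1})
    -- η is a measurable version of the regression function x ↦ P(Y = 1 ∣ X = x)
    (η : 𝒳 → ℝ) (hη : Measurable η) (hη01 : ∀ x, η x ∈ Set.Icc (0 : ℝ) 1)
    (hreg : ∀ A : Set 𝒳, MeasurableSet A →
      P {ω | X ω ∈ A ∧ Y ω = 1} = ∫⁻ x in A, ENNReal.ofReal (η x) ∂(P.map X))
    -- noncoverage levels and thresholds
    (αm α1 : ℝ) (hαm : αm ∈ Set.Ioo (0 : ℝ) 1) (hα1 : α1 ∈ Set.Ioo (0 : ℝ) 1)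
    (tm t1 : ℝ)
    (htm : P[|{ω | Y ω = -1}] {ω | tm < η (X ω)} = ENNReal.ofReal αm)
    (ht1 : P[|{ω | Y ω = 1}] {ω | η (X ω) < t1} = ENNReal.ofReal α1)
    -- Assumption 1: the distribution of η(X) is atomless under both class-conditional
    -- distributions, and t1 ≤ 1/2 ≤ tm
    (ht1half : t1 ≤ 1 / 2) (hhalftm : 1 / 2 ≤ tm)
    -- Assumption 2
    (c : ℝ) (hc : 0 < c) (hctm : c ≤ tm - 1 / 2) (hct1 : c ≤ 1 / 2 - t1)
    (ε : ℝ) (hε : 0 ≤ ε)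
    -- the Bayes-type rule f*
    (fstar : 𝒳 → ℝ)
    (hfstar : ∀ x, fstar x =
      if tm < η x then 1 + ε
      else if t1 ≤ η x then ε * Real.sign (η x - 1 / 2)
      else -(1 + ε))
    -- an arbitrary measurable feasible competitor f
    (f : 𝒳 → ℝ) (hf : Measurable f)
    (hfeasm : P[|{ω | Y ω = -1}] {ω | Y ω * f (X ω) < -ε} ≤ ENNReal.ofReal αm)
    (hfeas1 : P[|{ω | Y ω = 1}] {ω | Y ω * f (X ω) < -ε} ≤ ENNReal.ofReal α1)
    (hfInt : Integrable (fun ω => max 0 (1 + ε - Y ω * f (X ω))) P) :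
    ((P {ω | Y ω * f (X ω) < -ε}).toReal
        + (1 / 2) * (P {ω | |f (X ω)| ≤ ε}).toReal)
      - ((P {ω | Y ω * fstar (X ω) < -ε}).toReal
        + (1 / 2) * (P {ω | |fstar (X ω)| ≤ ε}).toReal)
    ≤ (1 / (4 * c) + 1 / 2) *
      ((∫ ω, max 0 (1 + ε - Y ω * f (X ω)) ∂P)
        - ∫ ω, max 0 (1 + ε - Y ω * fstar (X ω)) ∂P) := by
  have hR : IsRegressionFunction P X Y η := ⟨hX, hY, hYval, hη, hη01, hreg⟩
  have hfstar' (x : 𝒳) : fstar x = optimalScore t1 tm ε (η x) := hfstar x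
  have hfsm : Measurable fstar := funext hfstar' ▸ measurable_optimalScore.comp hη
  have hZs : Measurable fun ω => fstar (X ω) := hfsm.comp hX
  have hZf : Measurable fun ω => f (X ω) := hf.comp hX
  obtain ⟨ω₁, hω₁⟩ := nonempty_of_measure_ne_zero (ht1.trans_ne (ENNReal.ofReal_pos.2 hα1.1).ne')
  obtain ⟨ωₘ, hωₘ⟩ := nonempty_of_measure_ne_zero (htm.trans_ne (ENNReal.ofReal_pos.2 hαm.1).ne')
  have ht1₀ : 0 < t1 := (hη01 _).1.trans_lt hω₁
  have htm₁ : tm < 1 := hωₘ.trans_le (hη01 _).2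
  set C := 1 / (4 * c) + 1 / 2 with hC
  set A := (C - 1 / 2) / t1 - 2 * C with hA
  set B := (C - 1 / 2) / (1 - tm) - 2 * C with hB
  have hC₀ : 1 / 2 ≤ C := le_add_of_nonneg_left (by positivity)
  have hA₀ := neg_half_le_multiplier hc ht1₀ (by linarith) hC
  have hB₀ := neg_half_le_multiplier hc (by linarith : 0 < 1 - tm) (by linarith) hC
  have hint_s := integrable_hinge_of_abs_le (P := P) (ε := ε) hY hZs hYval
    fun ω => (hfstar' (X ω)).symm ▸ abs_optimalScore_le hε
  have hrisk := hR.integral_lagrangian_le (by linarith) hA₀ hB₀ hfsm hf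
    (fun x => hfstar' x ▸ condLagrangian_optimalScore_le hC₀ hA₀ hB₀ hε (hη01 x).1 (hη01 x).2 ht1₀
      ht1half hhalftm htm₁ hA hB (f x))
    (integrable_lagrangian hY hZs hint_s) (integrable_lagrangian hY hZf hfInt)
  rw [integral_lagrangian_eq hY hZs hint_s, integral_lagrangian_eq hY hZf hfInt] at hrisk
  have ha : P.real ({ω | Y ω = 1} ∩ {ω | Y ω * f (X ω) < -ε})
      ≤ P.real ({ω | Y ω = 1} ∩ {ω | Y ω * fstar (X ω) < -ε}) := by
    rw [inter_setOf_mul_lt_eq (Z := fun ω => fstar (X ω)) (p := fun ω => η (X ω) < t1)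
      fun ω => by rw [one_mul, hfstar', optimalScore_lt_neg_iff hε (by linarith)]]
    exact measureReal_inter_le_of_cond_le (hR.measurableSet_label 1) hpos1.ne' (hfeas1.trans ht1.ge)
  have hb : P.real ({ω | Y ω = -1} ∩ {ω | Y ω * f (X ω) < -ε})
      ≤ P.real ({ω | Y ω = -1} ∩ {ω | Y ω * fstar (X ω) < -ε}) := by
    rw [inter_setOf_mul_lt_eq (Z := fun ω => fstar (X ω)) (p := fun ω => tm < η (X ω))
      fun ω => by rw [neg_one_mul, neg_lt_neg_iff, hfstar', lt_optimalScore_iff hε (by linarith)]]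
    exact measureReal_inter_le_of_cond_le (hR.measurableSet_label (-1)) hposm.ne'
      (hfeasm.trans htm.ge)
  simp only [← measureReal_def]
  rw [measureReal_eq_add_label hY hYval {ω | Y ω * f (X ω) < -ε},
    measureReal_eq_add_label hY hYval {ω | Y ω * fstar (X ω) < -ε}]
  nlinarith [mul_le_mul_of_nonneg_left ha (by linarith : 0 ≤ A + 1),
    mul_le_mul_of_nonneg_left hb (by linarith : 0 ≤ B + 1)]

/-- Under Assumptions 1 and 2, with `C = 1/(4c) + 1/2`, for every measurable feasible `f`, the excess `R̄`-risk is controlled by the excess ε-hinge risk: `R̄(f, ε) − R̄(f*, ε) ≤ C·(R_H(f, ε) − R_H(f*, ε))`. -/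
theorem excess_Rbar_le_excess_hinge
    {𝒳 : Type*} [MeasurableSpace 𝒳]
    {Ω : Type*} [MeasurableSpace Ω] (P : Measure Ω) [IsProbabilityMeasure P]
    (X : Ω → 𝒳) (Y : Ω → ℝ) (hX : Measurable X) (hY : Measurable Y)
    (hYval : ∀ ω, Y ω = 1 ∨ Y ω = -1)
    (hpos1 : 0 < P {ω | Y ω = 1}) (hposm : 0 < P {ω | Y ω = -1})
    -- η is a measurable version of the regression function x ↦ P(Y = 1 ∣ X = x)
    (η : 𝒳 → ℝ) (hη : Measurable η) (hη01 : ∀ x, η x ∈ Set.Icc (0 : ℝ) 1)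
    (hreg : ∀ A : Set 𝒳, MeasurableSet A →
      P {ω | X ω ∈ A ∧ Y ω = 1} = ∫⁻ x in A, ENNReal.ofReal (η x) ∂(P.map X))
    -- noncoverage levels and thresholds
    (αm α1 : ℝ) (hαm : αm ∈ Set.Ioo (0 : ℝ) 1) (hα1 : α1 ∈ Set.Ioo (0 : ℝ) 1)
    (tm t1 : ℝ)
    (htm : P[|{ω | Y ω = -1}] {ω | tm < η (X ω)} = ENNReal.ofReal αm)
    (ht1 : P[|{ω | Y ω = 1}] {ω | η (X ω) < t1} = ENNReal.ofReal α1)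
    -- Assumption 1: the distribution of η(X) is atomless under both class-conditional
    -- distributions, and t1 ≤ 1/2 ≤ tm
    (hatomlessm : ∀ t : ℝ, P[|{ω | Y ω = -1}] {ω | η (X ω) = t} = 0)
    (hatomless1 : ∀ t : ℝ, P[|{ω | Y ω = 1}] {ω | η (X ω) = t} = 0)
    (ht1half : t1 ≤ 1 / 2) (hhalftm : 1 / 2 ≤ tm)
    -- Assumption 2
    (c : ℝ) (hc : 0 < c) (hctm : c ≤ tm - 1 / 2) (hct1 : c ≤ 1 / 2 - t1)
    (ε : ℝ) (hε : 0 ≤ ε)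
    -- the Bayes-type rule f*
    (fstar : 𝒳 → ℝ)
    (hfstar : ∀ x, fstar x =
      if tm < η x then 1 + ε
      else if t1 ≤ η x then ε * Real.sign (η x - 1 / 2)
      else -(1 + ε))
    -- an arbitrary measurable feasible competitor f
    (f : 𝒳 → ℝ) (hf : Measurable f)
    (hfeasm : P[|{ω | Y ω = -1}] {ω | Y ω * f (X ω) < -ε} ≤ ENNReal.ofReal αm)
    (hfeas1 : P[|{ω | Y ω = 1}] {ω | Y ω * f (X ω) < -ε} ≤ ENNReal.ofReal α1)
    (hfInt : Integrable (fun ω => max 0 (1 + ε - Y ω * f (X ω))) P) :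
    ((P {ω | Y ω * f (X ω) < -ε}).toReal
        + (1 / 2) * (P {ω | |f (X ω)| ≤ ε}).toReal)
      - ((P {ω | Y ω * fstar (X ω) < -ε}).toReal
        + (1 / 2) * (P {ω | |fstar (X ω)| ≤ ε}).toReal)
    ≤ (1 / (4 * c) + 1 / 2) *
      ((∫ ω, max 0 (1 + ε - Y ω * f (X ω)) ∂P)
        - ∫ ω, max 0 (1 + ε - Y ω * fstar (X ω)) ∂P) :=
  excess_Rbar_le_excess_hinge_general P X Y hX hY hYval hpos1 hposm η hη hη01 hreg αm α1 hαm hα1 tm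
    t1 htm ht1 ht1half hhalftm c hc hctm hct1 ε hε fstar hfstar f hf hfeasm hfeas1 hfInt
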